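/- arXiv:2408.14733 — 2 statements merged into one kernel-verified Lean document; each statement's English description precedes it below -/
import Mathlib

section
/- Let J be the endomorphism of 𝔤₃ with J e₁ = e₂, J e₂ = −e₁, J e₃ = e₄, J e₄ = −e₃, J e₅ = e₆, J e₆ = −e₅. Then J² = −Id and the Nijenhuis tensor N_J vanishes identically, so J is an integrable complex structure on 𝔤₃. Moreover, the 2-form ω = e¹∧e² + e³∧e⁴ + e⁵∧e⁶ satisfies ω(JX,JY) = ω(X,Y) for all X, Y ∈ 𝔤₃, but ω∧dω ≠ 0. -/
open Finset

noncomputable section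

/-- The underlying vector space `ℝ⁶`. -/
abbrev V : Type := Fin 6 → ℝ

/-- The `i`-th standard basis vector `eᵢ` (0-indexed: `e 0 = e₁`, …, `e 5 = e₆`). -/
def e (i : Fin 6) : V := Pi.single i 1

/-- The Lie bracket of the nilpotent Lie algebra 𝔤₃, with nonzero brackets
`[e₁,e₂]=e₅`, `[e₃,e₄]=e₅` (0-indexed below). -/
def bra (X Y : V) : V :=
  (X 0 * Y 1 - X 1 * Y 0 + X 2 * Y 3 - X 3 * Y 2) • e 4

/-- The Chevalley–Eilenberg differential of a 2-form:
`dω(X,Y,Z) = −ω([X,Y],Z) + ω([X,Z],Y) − ω([Y,Z],X)`. -/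
def dOm (ω : V → V → ℝ) (X Y Z : V) : ℝ :=
  -ω (bra X Y) Z + ω (bra X Z) Y - ω (bra Y Z) X

/-- The wedge product of a 2-form and a 3-form, as a 5-form:
`(ω∧τ)(X₁,…,X₅) = (1/(2!·3!)) Σ_{σ∈S₅} sgn(σ) ω(X_{σ1},X_{σ2}) τ(X_{σ3},X_{σ4},X_{σ5})`. -/
def wedge23 (ω : V → V → ℝ) (τ : V → V → V → ℝ) (Xs : Fin 5 → V) : ℝ :=
  (1 / 12 : ℝ) * ∑ σ : Equiv.Perm (Fin 5),
    ((Equiv.Perm.sign σ : ℤ) : ℝ) *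
      (ω (Xs (σ 0)) (Xs (σ 1)) * τ (Xs (σ 2)) (Xs (σ 3)) (Xs (σ 4)))

/-- The 2-form `ω = Σ_{i<j} w_{ij} e^i ∧ e^j` determined by the coefficients `w i j`
(only the entries with `i < j` are used). -/
def form2 (w : Fin 6 → Fin 6 → ℝ) (X Y : V) : ℝ :=
  ∑ i : Fin 6, ∑ j : Fin 6, if i < j then w i j * (X i * Y j - X j * Y i) else 0

/-- The Nijenhuis tensor of an endomorphism `J` with `J² = −Id`:
`N_J(X,Y) = [JX,JY] − [X,Y] − J[JX,Y] − J[X,JY]`. -/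
def nijJ (J : V → V) (X Y : V) : V :=
  bra (J X) (J Y) - bra X Y - J (bra (J X) Y) - J (bra X (J Y))

/-- The almost complex structure `J` on 𝔤₃ coming from the Sasaki structure:
`J e₁ = e₂`, `J e₂ = −e₁`, `J e₃ = e₄`, `J e₄ = −e₃`, `J e₅ = e₆`, `J e₆ = −e₅`
(0-indexed below). -/
def Jg3 : V → V := fun X =>
  X 0 • e 1 - X 1 • e 0 + X 2 • e 3 - X 3 • e 2 + X 4 • e 5 - X 5 • e 4

/-- The Hermitian 2-form `ω = e¹∧e² + e³∧e⁴ + e⁵∧e⁶` on 𝔤₃ (0-indexed). -/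
def omH : V → V → ℝ :=
  form2
    ![![0, 1, 0, 0, 0, 0],
      ![0, 0, 0, 0, 0, 0],
      ![0, 0, 0, 1, 0, 0],
      ![0, 0, 0, 0, 0, 0],
      ![0, 0, 0, 0, 0, 1],
      ![0, 0, 0, 0, 0, 0]]


set_option maxRecDepth 10000

@[simp] lemma cons_val_five' {α : Type*} {m : ℕ} (x : α) (u : Fin (m+5) → α) :
    Matrix.vecCons x u 5 =
      Matrix.vecHead (Matrix.vecTail (Matrix.vecTail (Matrix.vecTail (Matrix.vecTail u)))) := rfl

lemma omH_apply (X Y : V) : omH X Y =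
    X 0*Y 1 - X 1*Y 0 + X 2*Y 3 - X 3*Y 2 + X 4*Y 5 - X 5*Y 4 := by
  simp (config := { decide := true }) [omH, form2, Fin.sum_univ_six]
  ring

lemma bra_apply (X Y : V) (j : Fin 6) :
    bra X Y j = (X 0 * Y 1 - X 1 * Y 0 + X 2 * Y 3 - X 3 * Y 2) * (if j = 4 then 1 else 0) := by
  simp [bra, e, Pi.single_apply]

lemma dOm_omH (X Y Z : V) : dOm omH X Y Z =
    -((X 0*Y 1 - X 1*Y 0 + X 2*Y 3 - X 3*Y 2) * Z 5)
    + (X 0*Z 1 - X 1*Z 0 + X 2*Z 3 - X 3*Z 2) * Y 5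
    - (Y 0*Z 1 - Y 1*Z 0 + Y 2*Z 3 - Y 3*Z 2) * X 5 := by
  simp (config := { decide := true }) [dOm, omH_apply, bra_apply]

lemma Jsq (X : V) : Jg3 (Jg3 X) = -X := by
  funext j
  fin_cases j <;>
    simp (config := { decide := true }) [Jg3, e, Pi.single_apply]

lemma nij (X Y : V) : nijJ Jg3 X Y = 0 := by
  funext j
  fin_cases j <;>
    simp (config := { decide := true }) [nijJ, bra, Jg3, e, Pi.single_apply] <;> ring

lemma compat (X Y : V) : omH (Jg3 X) (Jg3 Y) = omH X Y := by
  have h : ∀ (Z : V) (j : Fin 6), Jg3 Z j =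
      (if j = 1 then 1 else 0) * Z 0 - (if j = 0 then 1 else 0) * Z 1
      + (if j = 3 then 1 else 0) * Z 2 - (if j = 2 then 1 else 0) * Z 3
      + (if j = 5 then 1 else 0) * Z 4 - (if j = 4 then 1 else 0) * Z 5 := by
    intro Z j
    simp [Jg3, e, Pi.single_apply]
  simp (config := { decide := true }) [omH_apply, h]
  ring

open Equiv in
lemma sum_perm_succ {n : ℕ} (f : Perm (Fin (n+1)) → ℝ) :
    ∑ σ : Perm (Fin (n+1)), f σ =
      ∑ p : Fin (n+1), ∑ τ : Perm (Fin n), f (Equiv.Perm.decomposeFin.symm (p, τ)) := by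
  rw [show (∑ p : Fin (n+1), ∑ τ : Perm (Fin n), f (Equiv.Perm.decomposeFin.symm (p, τ)))
      = ∑ q : Fin (n+1) × Perm (Fin n), f (Equiv.Perm.decomposeFin.symm q) from
    (Fintype.sum_prod_type
      (fun q : Fin (n+1) × Perm (Fin n) => f (Equiv.Perm.decomposeFin.symm q))).symm]
  exact Fintype.sum_equiv Equiv.Perm.decomposeFin _ _ (fun σ => by simp)

open Equiv in
lemma sum_perm_one (f : Perm (Fin 1) → ℝ) : ∑ σ : Perm (Fin 1), f σ = f 1 :=
  Fintype.sum_eq_single 1 (fun σ hσ => absurd (Subsingleton.elim σ 1) hσ)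

open Equiv in
lemma sum_perm_two (f : Perm (Fin 2) → ℝ) :
    ∑ σ : Perm (Fin 2), f σ =
      ∑ p : Fin 2, f (Equiv.Perm.decomposeFin.symm (p, 1)) := by
  rw [sum_perm_succ]
  exact Finset.sum_congr rfl (fun p _ => sum_perm_one _)

open Equiv in
lemma sum_perm_three (f : Perm (Fin 3) → ℝ) :
    ∑ σ : Perm (Fin 3), f σ =
      ∑ p : Fin 3, ∑ q : Fin 2,
        f (Equiv.Perm.decomposeFin.symm (p, Equiv.Perm.decomposeFin.symm (q, 1))) := by
  rw [sum_perm_succ]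
  exact Finset.sum_congr rfl (fun p _ => sum_perm_two _)

open Equiv in
lemma sum_perm_four (f : Perm (Fin 4) → ℝ) :
    ∑ σ : Perm (Fin 4), f σ =
      ∑ p : Fin 4, ∑ q : Fin 3, ∑ r : Fin 2,
        f (Equiv.Perm.decomposeFin.symm (p, Equiv.Perm.decomposeFin.symm (q,
          Equiv.Perm.decomposeFin.symm (r, 1)))) := by
  rw [sum_perm_succ]
  exact Finset.sum_congr rfl (fun p _ => sum_perm_three _)

open Equiv in
lemma sum_perm_five (f : Perm (Fin 5) → ℝ) :
    ∑ σ : Perm (Fin 5), f σ =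
      ∑ p : Fin 5, ∑ q : Fin 4, ∑ r : Fin 3, ∑ s : Fin 2,
        f (Equiv.Perm.decomposeFin.symm (p, Equiv.Perm.decomposeFin.symm (q,
          Equiv.Perm.decomposeFin.symm (r, Equiv.Perm.decomposeFin.symm (s, 1))))) := by
  rw [sum_perm_succ]
  exact Finset.sum_congr rfl (fun p _ => sum_perm_four _)

def EE : Fin 5 → V := fun t => e (![0, 1, 2, 3, 5] t)

lemma key : wedge23 omH (dOm omH) EE = -2 := by
  rw [wedge23, sum_perm_five]
  simp only [omH_apply, dOm_omH,
    Fin.sum_univ_five, Fin.sum_univ_four, Fin.sum_univ_three, Fin.sum_univ_two,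
    show (1:Fin 5) = (0:Fin 4).succ from rfl, show (2:Fin 5) = (1:Fin 4).succ from rfl,
    show (3:Fin 5) = (2:Fin 4).succ from rfl, show (4:Fin 5) = (3:Fin 4).succ from rfl,
    show (1:Fin 4) = (0:Fin 3).succ from rfl, show (2:Fin 4) = (1:Fin 3).succ from rfl,
    show (3:Fin 4) = (2:Fin 3).succ from rfl,
    show (1:Fin 3) = (0:Fin 2).succ from rfl, show (2:Fin 3) = (1:Fin 2).succ from rfl,
    show (1:Fin 2) = (0:Fin 1).succ from rfl,
    Equiv.Perm.decomposeFin_symm_apply_zero, Equiv.Perm.decomposeFin_symm_apply_succ,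
    Equiv.Perm.decomposeFin.symm_sign, Equiv.Perm.sign_one, Equiv.Perm.coe_one, id_eq]
  simp (config := { decide := true }) only [Equiv.swap_apply_def, EE, e, Pi.single_apply,
    show ((0:Fin 1).succ = 1) from rfl, show ((0:Fin 2).succ = 1) from rfl,
    show ((1:Fin 2).succ = 2) from rfl, show ((0:Fin 3).succ = 1) from rfl,
    show ((1:Fin 3).succ = 2) from rfl, show ((2:Fin 3).succ = 3) from rfl,
    show ((0:Fin 4).succ = 1) from rfl, show ((1:Fin 4).succ = 2) from rfl,
    show ((2:Fin 4).succ = 3) from rfl, show ((3:Fin 4).succ = 4) from rfl]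
  norm_num

/-- `J² = −Id`, the Nijenhuis tensor of `J` vanishes identically
(so `J` is an integrable complex structure on 𝔤₃), the 2-form
`ω = e¹∧e² + e³∧e⁴ + e⁵∧e⁶` is `J`-compatible, but `ω∧dω ≠ 0`. -/
theorem statement17 :
    (∀ X : V, Jg3 (Jg3 X) = -X) ∧
    (∀ X Y : V, nijJ Jg3 X Y = 0) ∧
    (∀ X Y : V, omH (Jg3 X) (Jg3 Y) = omH X Y) ∧
    (∃ Xs : Fin 5 → V, wedge23 omH (dOm omH) Xs ≠ 0) := by
  refine ⟨Jsq, nij, compat, ⟨EE, ?_⟩⟩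
  rw [key]
  norm_num
end
end

section
/- Let P be the endomorphism of 𝔤₃ with P e₁ = e₁, P e₂ = −e₂, P e₃ = e₃, P e₄ = −e₄, P e₅ = e₅, P e₆ = −e₆, and let ω = e¹∧e² − e³∧e⁴ + e⁵∧e⁶. Then P² = Id, the (+1)-eigenspace span{e₁,e₃,e₅} and the (−1)-eigenspace span{e₂,e₄,e₆} are both Lie subalgebras of 𝔤₃, the Nijenhuis tensor N_P vanishes identically (so P is an integrable paracomplex structure), ω(PX,PY) = −ω(X,Y) for all X, Y ∈ 𝔤₃, and ω∧dω = 0. -/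
open Finset

noncomputable section

/-- The Nijenhuis tensor of an endomorphism `P` with `P² = Id`:
`N_P(X,Y) = [PX,PY] + [X,Y] − P[PX,Y] − P[X,PY]`. -/
def nijP (P : V → V) (X Y : V) : V :=
  bra (P X) (P Y) + bra X Y - P (bra (P X) Y) - P (bra X (P Y))

/-- The semi-Kähler 2-form `ω = e¹∧e² − e³∧e⁴ + e⁵∧e⁶` on 𝔤₃ (0-indexed). -/
def omSK : V → V → ℝ :=
  form2
    ![![0, 1, 0, 0, 0, 0],
      ![0, 0, 0, 0, 0, 0],
      ![0, 0, 0, -1, 0, 0],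
      ![0, 0, 0, 0, 0, 0],
      ![0, 0, 0, 0, 0, 1],
      ![0, 0, 0, 0, 0, 0]]

/-- The paracomplex structure `P = diag{+1,−1,+1,−1,+1,−1}` on 𝔤₃ (0-indexed). -/
def Pg3 : V → V := fun X =>
  X 0 • e 0 - X 1 • e 1 + X 2 • e 2 - X 3 • e 3 + X 4 • e 4 - X 5 • e 5

-- helpers start here
lemma e_apply (i j : Fin 6) : e i j = if j = i then 1 else 0 := Pi.single_apply i 1 j

set_option maxRecDepth 10000 in
lemma omSK_eq (A B : V) : omSK A B =
    (A 0 * B 1 - A 1 * B 0) - (A 2 * B 3 - A 3 * B 2) + (A 4 * B 5 - A 5 * B 4) := by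
  simp only [omSK, form2, Fin.sum_univ_succ, Fin.sum_univ_zero, Matrix.cons_val_zero,
    Matrix.cons_val_succ]
  norm_num [Fin.lt_def]
  rw [show Fin.succ (2:Fin 5) = (3:Fin 6) from rfl,
    show Fin.succ (Fin.succ (2:Fin 4)) = (4:Fin 6) from rfl,
    show Fin.succ (Fin.succ (Fin.succ (2:Fin 3))) = (5:Fin 6) from rfl]
  ring

def mu (A B : V) : ℝ := A 0 * B 1 - A 1 * B 0 + A 2 * B 3 - A 3 * B 2

lemma bra_app (X Y : V) (j : Fin 6) : bra X Y j = mu X Y * (if j = 4 then 1 else 0) := by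
  simp only [bra, Pi.smul_apply, e_apply, smul_eq_mul, mu]

lemma P0 (X : V) : Pg3 X 0 = X 0 := by
  simp [Pg3, e_apply]
lemma P1 (X : V) : Pg3 X 1 = -X 1 := by
  simp [Pg3, e_apply]
lemma P2 (X : V) : Pg3 X 2 = X 2 := by
  simp [Pg3, e_apply]
lemma P3 (X : V) : Pg3 X 3 = -X 3 := by
  simp [Pg3, e_apply]
lemma P4 (X : V) : Pg3 X 4 = X 4 := by
  simp [Pg3, e_apply]
lemma P5 (X : V) : Pg3 X 5 = -X 5 := by
  simp [Pg3, e_apply]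

def evenSub : Submodule ℝ V where
  carrier := {X | X 1 = 0 ∧ X 3 = 0 ∧ X 5 = 0}
  add_mem' := by
    rintro a b ⟨a1, a3, a5⟩ ⟨b1, b3, b5⟩
    refine ⟨?_, ?_, ?_⟩ <;> simp [Pi.add_apply, a1, a3, a5, b1, b3, b5]
  zero_mem' := ⟨rfl, rfl, rfl⟩
  smul_mem' := by
    rintro c a ⟨a1, a3, a5⟩
    refine ⟨?_, ?_, ?_⟩ <;> simp [Pi.smul_apply, a1, a3, a5]

def oddSub : Submodule ℝ V where
  carrier := {X | X 0 = 0 ∧ X 2 = 0 ∧ X 4 = 0}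
  add_mem' := by
    rintro a b ⟨a1, a3, a5⟩ ⟨b1, b3, b5⟩
    refine ⟨?_, ?_, ?_⟩ <;> simp [Pi.add_apply, a1, a3, a5, b1, b3, b5]
  zero_mem' := ⟨rfl, rfl, rfl⟩
  smul_mem' := by
    rintro c a ⟨a1, a3, a5⟩
    refine ⟨?_, ?_, ?_⟩ <;> simp [Pi.smul_apply, a1, a3, a5]

lemma mem_span_even (X : V) :
    X ∈ Submodule.span ℝ ({e 0, e 2, e 4} : Set V) ↔ X 1 = 0 ∧ X 3 = 0 ∧ X 5 = 0 := by
  constructor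
  · intro hX
    have hle : Submodule.span ℝ ({e 0, e 2, e 4} : Set V) ≤ evenSub := by
      rw [Submodule.span_le]
      rintro x (rfl | rfl | rfl) <;> exact ⟨by simp [e_apply], by simp [e_apply], by simp [e_apply]⟩
    exact hle hX
  · rintro ⟨h1, h3, h5⟩
    have hX : X = X 0 • e 0 + X 2 • e 2 + X 4 • e 4 := by
      funext j
      fin_cases j <;>
        simp [e_apply, Pi.add_apply, Pi.smul_apply, h1, h3, h5]
    rw [hX]
    refine Submodule.add_mem _ (Submodule.add_mem _ ?_ ?_) ?_ <;>
      refine Submodule.smul_mem _ _ (Submodule.subset_span ?_) <;> simp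

lemma mem_span_odd (X : V) :
    X ∈ Submodule.span ℝ ({e 1, e 3, e 5} : Set V) ↔ X 0 = 0 ∧ X 2 = 0 ∧ X 4 = 0 := by
  constructor
  · intro hX
    have hle : Submodule.span ℝ ({e 1, e 3, e 5} : Set V) ≤ oddSub := by
      rw [Submodule.span_le]
      rintro x (rfl | rfl | rfl) <;> exact ⟨by simp [e_apply], by simp [e_apply], by simp [e_apply]⟩
    exact hle hX
  · rintro ⟨h0, h2, h4⟩
    have hX : X = X 1 • e 1 + X 3 • e 3 + X 5 • e 5 := by
      funext j
      fin_cases j <;>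
        simp [e_apply, Pi.add_apply, Pi.smul_apply, h0, h2, h4]
    rw [hX]
    refine Submodule.add_mem _ (Submodule.add_mem _ ?_ ?_) ?_ <;>
      refine Submodule.smul_mem _ _ (Submodule.subset_span ?_) <;> simp

lemma dOm_omSK (X Y Z : V) :
    dOm omSK X Y Z = -(mu X Y * Z 5) + mu X Z * Y 5 - mu Y Z * X 5 := by
  simp only [dOm, omSK_eq, bra_app]
  simp

open Equiv Equiv.Perm in
lemma sum_reindex (g : Equiv.Perm (Fin 5) → ℝ) (π : Equiv.Perm (Fin 5)) :
    ∑ σ : Equiv.Perm (Fin 5), ((Equiv.Perm.sign σ : ℤ) : ℝ) * g (σ * π)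
      = ((Equiv.Perm.sign π : ℤ) : ℝ) * ∑ σ : Equiv.Perm (Fin 5),
          ((Equiv.Perm.sign σ : ℤ) : ℝ) * g σ := by
  rw [Finset.mul_sum]
  refine Fintype.sum_equiv (Equiv.mulRight π) _ _ ?_
  intro σ
  simp only [Equiv.coe_mulRight, Equiv.Perm.sign_mul, Units.val_mul, Int.cast_mul]
  rcases Int.units_eq_one_or (Equiv.Perm.sign π) with h | h <;> rw [h] <;> push_cast <;> ring

open Equiv Equiv.Perm in
lemma sum_vanish (g : Equiv.Perm (Fin 5) → ℝ) (π : Equiv.Perm (Fin 5))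
    (hπ : Equiv.Perm.sign π = -1) (hg : ∀ σ, g (σ * π) = g σ) :
    ∑ σ : Equiv.Perm (Fin 5), ((Equiv.Perm.sign σ : ℤ) : ℝ) * g σ = 0 := by
  have h := sum_reindex g π
  rw [hπ] at h
  simp only [hg] at h
  push_cast at h
  linarith

def pc (i j k l : Fin 6) (Xs : Fin 5 → V) (σ : Equiv.Perm (Fin 5)) : ℝ :=
  Xs (σ 0) i * Xs (σ 1) j * Xs (σ 2) k * Xs (σ 3) l * Xs (σ 4) 5

def pm (i j : Fin 6) (Xs : Fin 5 → V) (σ : Equiv.Perm (Fin 5)) : ℝ :=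
  Xs (σ 0) i * Xs (σ 1) j * mu (Xs (σ 2)) (Xs (σ 3)) * Xs (σ 4) 5

def ph (Xs : Fin 5 → V) (σ : Equiv.Perm (Fin 5)) : ℝ :=
  (Xs (σ 0) 0 * Xs (σ 1) 1 - Xs (σ 0) 1 * Xs (σ 1) 0) *
    (Xs (σ 2) 2 * Xs (σ 3) 3 - Xs (σ 2) 3 * Xs (σ 3) 2) * Xs (σ 4) 5

def Gf (Xs : Fin 5 → V) (σ : Equiv.Perm (Fin 5)) : ℝ :=
  omSK (Xs (σ 0)) (Xs (σ 1)) * mu (Xs (σ 2)) (Xs (σ 3)) * Xs (σ 4) 5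

set_option maxHeartbeats 1000000 in
lemma key_sum (Xs : Fin 5 → V) :
    ∑ σ : Equiv.Perm (Fin 5), ((Equiv.Perm.sign σ : ℤ) : ℝ) *
      (omSK (Xs (σ 0)) (Xs (σ 1)) * dOm omSK (Xs (σ 2)) (Xs (σ 3)) (Xs (σ 4))) = 0 := by
  have hn1 : ∑ σ : Equiv.Perm (Fin 5), ((Equiv.Perm.sign σ : ℤ) : ℝ) * pc 0 1 0 1 Xs σ = 0 :=
    sum_vanish _ (Equiv.swap 0 2) (Equiv.Perm.sign_swap (by decide))
      (by intro σ; simp [pc, Equiv.Perm.mul_apply, Equiv.swap_apply_def]; try ring; try tauto)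
  have hn2 : ∑ σ : Equiv.Perm (Fin 5), ((Equiv.Perm.sign σ : ℤ) : ℝ) * pc 0 1 1 0 Xs σ = 0 :=
    sum_vanish _ (Equiv.swap 0 3) (Equiv.Perm.sign_swap (by decide))
      (by intro σ; simp [pc, Equiv.Perm.mul_apply, Equiv.swap_apply_def]; try ring; try tauto)
  have hn3 : ∑ σ : Equiv.Perm (Fin 5), ((Equiv.Perm.sign σ : ℤ) : ℝ) * pc 1 0 0 1 Xs σ = 0 :=
    sum_vanish _ (Equiv.swap 1 2) (Equiv.Perm.sign_swap (by decide))
      (by intro σ; simp [pc, Equiv.Perm.mul_apply, Equiv.swap_apply_def]; try ring; try tauto)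
  have hn4 : ∑ σ : Equiv.Perm (Fin 5), ((Equiv.Perm.sign σ : ℤ) : ℝ) * pc 1 0 1 0 Xs σ = 0 :=
    sum_vanish _ (Equiv.swap 0 2) (Equiv.Perm.sign_swap (by decide))
      (by intro σ; simp [pc, Equiv.Perm.mul_apply, Equiv.swap_apply_def]; try ring; try tauto)
  have hq1 : ∑ σ : Equiv.Perm (Fin 5), ((Equiv.Perm.sign σ : ℤ) : ℝ) * pc 2 3 2 3 Xs σ = 0 :=
    sum_vanish _ (Equiv.swap 0 2) (Equiv.Perm.sign_swap (by decide))
      (by intro σ; simp [pc, Equiv.Perm.mul_apply, Equiv.swap_apply_def]; try ring; try tauto)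
  have hq2 : ∑ σ : Equiv.Perm (Fin 5), ((Equiv.Perm.sign σ : ℤ) : ℝ) * pc 2 3 3 2 Xs σ = 0 :=
    sum_vanish _ (Equiv.swap 0 3) (Equiv.Perm.sign_swap (by decide))
      (by intro σ; simp [pc, Equiv.Perm.mul_apply, Equiv.swap_apply_def]; try ring; try tauto)
  have hq3 : ∑ σ : Equiv.Perm (Fin 5), ((Equiv.Perm.sign σ : ℤ) : ℝ) * pc 3 2 2 3 Xs σ = 0 :=
    sum_vanish _ (Equiv.swap 1 2) (Equiv.Perm.sign_swap (by decide))
      (by intro σ; simp [pc, Equiv.Perm.mul_apply, Equiv.swap_apply_def]; try ring; try tauto)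
  have hq4 : ∑ σ : Equiv.Perm (Fin 5), ((Equiv.Perm.sign σ : ℤ) : ℝ) * pc 3 2 3 2 Xs σ = 0 :=
    sum_vanish _ (Equiv.swap 0 2) (Equiv.Perm.sign_swap (by decide))
      (by intro σ; simp [pc, Equiv.Perm.mul_apply, Equiv.swap_apply_def]; try ring; try tauto)
  have hm1 : ∑ σ : Equiv.Perm (Fin 5), ((Equiv.Perm.sign σ : ℤ) : ℝ) * pm 4 5 Xs σ = 0 :=
    sum_vanish _ (Equiv.swap 1 4) (Equiv.Perm.sign_swap (by decide))
      (by intro σ; simp [pm, Equiv.Perm.mul_apply, Equiv.swap_apply_def]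
          try ring
          try tauto)
  have hm2 : ∑ σ : Equiv.Perm (Fin 5), ((Equiv.Perm.sign σ : ℤ) : ℝ) * pm 5 4 Xs σ = 0 :=
    sum_vanish _ (Equiv.swap 0 4) (Equiv.Perm.sign_swap (by decide))
      (by intro σ; simp [pm, Equiv.Perm.mul_apply, Equiv.swap_apply_def]
          try ring
          try tauto)
  have hph : ∑ σ : Equiv.Perm (Fin 5), ((Equiv.Perm.sign σ : ℤ) : ℝ)
        * ph Xs (σ * (Equiv.swap 0 2 * Equiv.swap 1 3))
      = ∑ σ : Equiv.Perm (Fin 5), ((Equiv.Perm.sign σ : ℤ) : ℝ) * ph Xs σ := by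
    rw [sum_reindex (ph Xs) (Equiv.swap 0 2 * Equiv.swap 1 3)]
    rw [show Equiv.Perm.sign (Equiv.swap (0 : Fin 5) 2 * Equiv.swap 1 3) = 1 by
      rw [Equiv.Perm.sign_mul, Equiv.Perm.sign_swap (by decide),
        Equiv.Perm.sign_swap (by decide)]; rfl]
    push_cast
    ring
  have hGdec : ∀ σ : Equiv.Perm (Fin 5), Gf Xs σ =
      (pc 0 1 0 1 Xs σ - pc 0 1 1 0 Xs σ - pc 1 0 0 1 Xs σ + pc 1 0 1 0 Xs σ)
      + (ph Xs σ - ph Xs (σ * (Equiv.swap 0 2 * Equiv.swap 1 3)))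
      - (pc 2 3 2 3 Xs σ - pc 2 3 3 2 Xs σ - pc 3 2 2 3 Xs σ + pc 3 2 3 2 Xs σ)
      + (pm 4 5 Xs σ - pm 5 4 Xs σ) := by
    intro σ
    simp [Gf, pc, pm, ph, mu, omSK_eq, Equiv.Perm.mul_apply, Equiv.swap_apply_def]
    ring
  have hS : ∑ σ : Equiv.Perm (Fin 5), ((Equiv.Perm.sign σ : ℤ) : ℝ) * Gf Xs σ = 0 := by
    calc ∑ σ : Equiv.Perm (Fin 5), ((Equiv.Perm.sign σ : ℤ) : ℝ) * Gf Xs σ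
        = ∑ σ : Equiv.Perm (Fin 5),
            ((((Equiv.Perm.sign σ : ℤ) : ℝ) * pc 0 1 0 1 Xs σ
              - ((Equiv.Perm.sign σ : ℤ) : ℝ) * pc 0 1 1 0 Xs σ
              - ((Equiv.Perm.sign σ : ℤ) : ℝ) * pc 1 0 0 1 Xs σ
              + ((Equiv.Perm.sign σ : ℤ) : ℝ) * pc 1 0 1 0 Xs σ)
            + (((Equiv.Perm.sign σ : ℤ) : ℝ) * ph Xs σ
              - ((Equiv.Perm.sign σ : ℤ) : ℝ) * ph Xs (σ * (Equiv.swap 0 2 * Equiv.swap 1 3)))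
            - (((Equiv.Perm.sign σ : ℤ) : ℝ) * pc 2 3 2 3 Xs σ
              - ((Equiv.Perm.sign σ : ℤ) : ℝ) * pc 2 3 3 2 Xs σ
              - ((Equiv.Perm.sign σ : ℤ) : ℝ) * pc 3 2 2 3 Xs σ
              + ((Equiv.Perm.sign σ : ℤ) : ℝ) * pc 3 2 3 2 Xs σ)
            + (((Equiv.Perm.sign σ : ℤ) : ℝ) * pm 4 5 Xs σ
              - ((Equiv.Perm.sign σ : ℤ) : ℝ) * pm 5 4 Xs σ)) := by
          refine Finset.sum_congr rfl fun σ _ => ?_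
          rw [hGdec σ]; ring
      _ = 0 := by
          simp only [Finset.sum_add_distrib, Finset.sum_sub_distrib]
          rw [hn1, hn2, hn3, hn4, hq1, hq2, hq3, hq4, hm1, hm2, hph]
          ring
  have hsummand : ∀ σ : Equiv.Perm (Fin 5),
      ((Equiv.Perm.sign σ : ℤ) : ℝ) *
        (omSK (Xs (σ 0)) (Xs (σ 1)) * dOm omSK (Xs (σ 2)) (Xs (σ 3)) (Xs (σ 4)))
      = -(((Equiv.Perm.sign σ : ℤ) : ℝ) * Gf Xs σ)
        + ((Equiv.Perm.sign σ : ℤ) : ℝ) * Gf Xs (σ * Equiv.swap 3 4)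
        - ((Equiv.Perm.sign σ : ℤ) : ℝ) * Gf Xs (σ * (Equiv.swap 2 3 * Equiv.swap 3 4)) := by
    intro σ
    rw [dOm_omSK]
    simp [Gf, Equiv.Perm.mul_apply, Equiv.swap_apply_def]
    ring
  calc ∑ σ : Equiv.Perm (Fin 5), ((Equiv.Perm.sign σ : ℤ) : ℝ) *
        (omSK (Xs (σ 0)) (Xs (σ 1)) * dOm omSK (Xs (σ 2)) (Xs (σ 3)) (Xs (σ 4)))
      = ∑ σ : Equiv.Perm (Fin 5),
          (-(((Equiv.Perm.sign σ : ℤ) : ℝ) * Gf Xs σ)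
          + ((Equiv.Perm.sign σ : ℤ) : ℝ) * Gf Xs (σ * Equiv.swap 3 4)
          - ((Equiv.Perm.sign σ : ℤ) : ℝ) * Gf Xs (σ * (Equiv.swap 2 3 * Equiv.swap 3 4))) :=
        Finset.sum_congr rfl fun σ _ => hsummand σ
    _ = 0 := by
        simp only [Finset.sum_add_distrib, Finset.sum_sub_distrib, Finset.sum_neg_distrib]
        rw [sum_reindex (Gf Xs) (Equiv.swap 3 4),
          sum_reindex (Gf Xs) (Equiv.swap 2 3 * Equiv.swap 3 4)]
        rw [Equiv.Perm.sign_swap (by decide)]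
        rw [show Equiv.Perm.sign (Equiv.swap (2 : Fin 5) 3 * Equiv.swap 3 4) = 1 by
          rw [Equiv.Perm.sign_mul, Equiv.Perm.sign_swap (by decide),
            Equiv.Perm.sign_swap (by decide)]; rfl]
        rw [hS]
        push_cast
        ring


/-- `P² = Id`; the `(+1)`-eigenspace of `P` is `span{e₁,e₃,e₅}` and the
`(−1)`-eigenspace is `span{e₂,e₄,e₆}`; both eigenspaces are Lie subalgebras of 𝔤₃;
the Nijenhuis tensor of `P` vanishes identically (so `P` is an integrable paracomplex
structure); `ω(PX,PY) = −ω(X,Y)` for all `X, Y`, where `ω = e¹∧e² − e³∧e⁴ + e⁵∧e⁶`;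
and `ω∧dω = 0` (0-indexed below). -/
theorem statement19 :
    (∀ X : V, Pg3 (Pg3 X) = X) ∧
    ({X : V | Pg3 X = X} = ↑(Submodule.span ℝ ({e 0, e 2, e 4} : Set V))) ∧
    ({X : V | Pg3 X = -X} = ↑(Submodule.span ℝ ({e 1, e 3, e 5} : Set V))) ∧
    (∀ X Y : V, X ∈ Submodule.span ℝ ({e 0, e 2, e 4} : Set V) →
      Y ∈ Submodule.span ℝ ({e 0, e 2, e 4} : Set V) →
      bra X Y ∈ Submodule.span ℝ ({e 0, e 2, e 4} : Set V)) ∧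
    (∀ X Y : V, X ∈ Submodule.span ℝ ({e 1, e 3, e 5} : Set V) →
      Y ∈ Submodule.span ℝ ({e 1, e 3, e 5} : Set V) →
      bra X Y ∈ Submodule.span ℝ ({e 1, e 3, e 5} : Set V)) ∧
    (∀ X Y : V, nijP Pg3 X Y = 0) ∧
    (∀ X Y : V, omSK (Pg3 X) (Pg3 Y) = -omSK X Y) ∧
    (∀ Xs : Fin 5 → V, wedge23 omSK (dOm omSK) Xs = 0) := by
  refine ⟨?_, ?_, ?_, ?_, ?_, ?_, ?_, ?_⟩
  · intro X
    funext j
    fin_cases j <;> simp [P0, P1, P2, P3, P4, P5]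
  · ext X
    simp only [Set.mem_setOf_eq, SetLike.mem_coe, mem_span_even]
    constructor
    · intro h
      refine ⟨?_, ?_, ?_⟩
      · have := congrFun h 1; rw [P1] at this; linarith
      · have := congrFun h 3; rw [P3] at this; linarith
      · have := congrFun h 5; rw [P5] at this; linarith
    · rintro ⟨h1, h3, h5⟩
      funext j
      fin_cases j <;> simp [P0, P1, P2, P3, P4, P5, h1, h3, h5]
  · ext X
    simp only [Set.mem_setOf_eq, SetLike.mem_coe, mem_span_odd]
    constructor
    · intro h
      refine ⟨?_, ?_, ?_⟩
      · have := congrFun h 0; rw [P0] at this; simp only [Pi.neg_apply] at this; linarith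
      · have := congrFun h 2; rw [P2] at this; simp only [Pi.neg_apply] at this; linarith
      · have := congrFun h 4; rw [P4] at this; simp only [Pi.neg_apply] at this; linarith
    · rintro ⟨h0, h2, h4⟩
      funext j
      fin_cases j <;> simp [P0, P1, P2, P3, P4, P5, h0, h2, h4, Pi.neg_apply]
  · intro X Y _ _
    rw [mem_span_even]
    refine ⟨?_, ?_, ?_⟩ <;> rw [bra_app] <;> simp
  · intro X Y hX hY
    rw [mem_span_odd] at hX hY ⊢
    obtain ⟨x0, x2, x4⟩ := hX
    obtain ⟨y0, y2, y4⟩ := hY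
    refine ⟨?_, ?_, ?_⟩ <;> rw [bra_app] <;> simp [mu, x0, x2, y0, y2]
  · intro X Y
    funext j
    fin_cases j <;>
      simp [nijP, Pi.add_apply, Pi.sub_apply, Pi.zero_apply, bra_app, mu,
        P0, P1, P2, P3, P4, P5] <;>
      ring
  · intro X Y
    rw [omSK_eq, omSK_eq]
    simp only [P0, P1, P2, P3, P4, P5]
    ring
  · intro Xs
    rw [wedge23, key_sum, mul_zero]
end
end
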